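/- arXiv:2307.10226 — 2 statements merged into one kernel-verified Lean document; each statement's English description precedes it below -/
import Mathlib

section
/- Let Π be an extended program, let F be the FOL-representation of Π, and let Y be a finite set of atoms not containing equality. Then EFES_Π(Y) is equivalent to ¬NFES_F(Y) under the assumption Π; that is, every model of Π satisfies the universal closure of EFES_Π(Y) ↔ ¬NFES_F(Y). -/
set_option linter.unusedVariables false

namespace SMLF

/-- Terms: object variables (named by naturals) and object constants.
There are no function constants of positive arity. -/
inductive Term (C : Type) where
  | var : ℕ → Term C
  | const : C → Term C

variable {C P D : Type} {ar : P → ℕ}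

def Term.eval (cI : C → D) (v : ℕ → D) : Term C → D
  | .var x => v x
  | .const c => cI c

def Term.vars : Term C → Set ℕ
  | .var x => {x}
  | .const _ => ∅

def Term.consts : Term C → Set C
  | .var _ => ∅
  | .const c => {c}

def Term.subst (θ : ℕ → Term C) : Term C → Term C
  | .var x => θ x
  | .const c => .const c

def Term.isVar : Term C → Prop
  | .var _ => True
  | .const _ => False

/-- A (non-equality) atom `p(t₁,…,tₖ)`. -/
abbrev Atom (C P : Type) (ar : P → ℕ) := Σ p : P, Fin (ar p) → Term C

def Atom.subst (θ : ℕ → Term C) (a : Atom C P ar) : Atom C P ar :=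
  ⟨a.1, fun i => (a.2 i).subst θ⟩

def Atom.vars (a : Atom C P ar) : Set ℕ := {x | ∃ i, a.2 i = Term.var x}

/-- An interpretation of the predicate constants over universe `D`
(also used for tuples `u` of predicate variables). -/
def PredI (P : Type) (ar : P → ℕ) (D : Type) : Type := ∀ p : P, (Fin (ar p) → D) → Prop

/-- `u ≤ p` : conjunction of ∀x(uᵢ(x) → pᵢ(x)). -/
def PredI.le (uI pI : PredI P ar D) : Prop := ∀ p xs, uI p xs → pI p xs

/-- `u = p` : conjunction of ∀x(uᵢ(x) ↔ pᵢ(x)). -/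
def PredI.eqv (uI pI : PredI P ar D) : Prop := ∀ p xs, uI p xs ↔ pI p xs

/-- `u < p` : (u ≤ p) ∧ ¬(u = p). -/
def PredI.lt (uI pI : PredI P ar D) : Prop := PredI.le uI pI ∧ ¬ PredI.eqv uI pI

/-- `Nonempty(u)` : ∃x¹ u₁(x¹) ∨ … ∨ ∃xⁿ uₙ(xⁿ). -/
def PredI.nonemp (uI : PredI P ar D) : Prop := ∃ p xs, uI p xs

/-- First-order formulas (¬F is shorthand for F → ⊥). -/
inductive Fml (C P : Type) (ar : P → ℕ) where
  | atom : (p : P) → (Fin (ar p) → Term C) → Fml C P ar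
  | eq : Term C → Term C → Fml C P ar
  | bot : Fml C P ar
  | and : Fml C P ar → Fml C P ar → Fml C P ar
  | or : Fml C P ar → Fml C P ar → Fml C P ar
  | imp : Fml C P ar → Fml C P ar → Fml C P ar
  | all : ℕ → Fml C P ar → Fml C P ar
  | ex : ℕ → Fml C P ar → Fml C P ar

/-- Tarskian satisfaction `I,v ⊨ F`. -/
def Fml.sat (cI : C → D) (pI : PredI P ar D) : Fml C P ar → (ℕ → D) → Prop
  | .atom p t, v => pI p (fun i => (t i).eval cI v)
  | .eq t₁ t₂, v => t₁.eval cI v = t₂.eval cI v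
  | .bot, _ => False
  | .and F G, v => F.sat cI pI v ∧ G.sat cI pI v
  | .or F G, v => F.sat cI pI v ∨ G.sat cI pI v
  | .imp F G, v => F.sat cI pI v → G.sat cI pI v
  | .all x F, v => ∀ d : D, F.sat cI pI (Function.update v x d)
  | .ex x F, v => ∃ d : D, F.sat cI pI (Function.update v x d)

/-- Satisfaction of a sentence (truth under every valuation). -/
def Fml.satSent (cI : C → D) (pI : PredI P ar D) (F : Fml C P ar) : Prop :=
  ∀ v : ℕ → D, F.sat cI pI v

/-- Satisfaction of `F*(u)` (atoms read via `uI`, the `F → G` clause also keeps `F → G`). -/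
def Fml.satStar (cI : C → D) (pI uI : PredI P ar D) : Fml C P ar → (ℕ → D) → Prop
  | .atom p t, v => uI p (fun i => (t i).eval cI v)
  | .eq t₁ t₂, v => t₁.eval cI v = t₂.eval cI v
  | .bot, _ => False
  | .and F G, v => F.satStar cI pI uI v ∧ G.satStar cI pI uI v
  | .or F G, v => F.satStar cI pI uI v ∨ G.satStar cI pI uI v
  | .imp F G, v => (F.satStar cI pI uI v → G.satStar cI pI uI v) ∧ (F.sat cI pI v → G.sat cI pI v)
  | .all x F, v => ∀ d : D, F.satStar cI pI uI (Function.update v x d)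
  | .ex x F, v => ∃ d : D, F.satStar cI pI uI (Function.update v x d)

/-- `I ⊨ SM[F]` for a sentence `F`: `F ∧ ¬∃u((u < p) ∧ F*(u))`. -/
def satSM (cI : C → D) (pI : PredI P ar D) (F : Fml C P ar) : Prop :=
  F.satSent cI pI ∧
    ¬ ∃ uI : PredI P ar D, PredI.lt uI pI ∧ ∀ v : ℕ → D, F.satStar cI pI uI v

/-- Satisfaction of `NES_F(u)`. -/
def Fml.satNES (cI : C → D) (pI uI : PredI P ar D) : Fml C P ar → (ℕ → D) → Prop
  | .atom p t, v => pI p (fun i => (t i).eval cI v) ∧ ¬ uI p (fun i => (t i).eval cI v)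
  | .eq t₁ t₂, v => t₁.eval cI v = t₂.eval cI v
  | .bot, _ => False
  | .and F G, v => F.satNES cI pI uI v ∧ G.satNES cI pI uI v
  | .or F G, v => F.satNES cI pI uI v ∨ G.satNES cI pI uI v
  | .imp F G, v => (F.satNES cI pI uI v → G.satNES cI pI uI v) ∧ (F.sat cI pI v → G.sat cI pI v)
  | .all x F, v => ∀ d : D, F.satNES cI pI uI (Function.update v x d)
  | .ex x F, v => ∃ d : D, F.satNES cI pI uI (Function.update v x d)

def Fml.freeVars : Fml C P ar → Set ℕ
  | .atom _ t => ⋃ i, (t i).vars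
  | .eq t₁ t₂ => t₁.vars ∪ t₂.vars
  | .bot => ∅
  | .and F G => F.freeVars ∪ G.freeVars
  | .or F G => F.freeVars ∪ G.freeVars
  | .imp F G => F.freeVars ∪ G.freeVars
  | .all x F => F.freeVars \ {x}
  | .ex x F => F.freeVars \ {x}

/-- The list of quantified (bound) variable occurrences, in order. -/
def Fml.quantVars : Fml C P ar → List ℕ
  | .atom _ _ => []
  | .eq _ _ => []
  | .bot => []
  | .and F G => F.quantVars ++ G.quantVars
  | .or F G => F.quantVars ++ G.quantVars
  | .imp F G => F.quantVars ++ G.quantVars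
  | .all x F => x :: F.quantVars
  | .ex x F => x :: F.quantVars

/-- Rectified form: no variable is both bound and free, and quantifiers
are followed by pairwise distinct variables. -/
def Fml.rectified (F : Fml C P ar) : Prop :=
  F.quantVars.Nodup ∧ ∀ x ∈ F.quantVars, x ∉ F.freeVars

def Fml.preds : Fml C P ar → Set P
  | .atom p _ => {p}
  | .eq _ _ => ∅
  | .bot => ∅
  | .and F G => F.preds ∪ G.preds
  | .or F G => F.preds ∪ G.preds
  | .imp F G => F.preds ∪ G.preds
  | .all _ F => F.preds
  | .ex _ F => F.preds

def Fml.consts : Fml C P ar → Set C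
  | .atom _ t => ⋃ i, (t i).consts
  | .eq t₁ t₂ => t₁.consts ∪ t₂.consts
  | .bot => ∅
  | .and F G => F.consts ∪ G.consts
  | .or F G => F.consts ∪ G.consts
  | .imp F G => F.consts ∪ G.consts
  | .all _ F => F.consts
  | .ex _ F => F.consts

/-- All (non-equality) atoms occurring in a formula. -/
def Fml.atomsOf : Fml C P ar → Set (Atom C P ar)
  | .atom p t => {⟨p, t⟩}
  | .eq _ _ => ∅
  | .bot => ∅
  | .and F G => F.atomsOf ∪ G.atomsOf
  | .or F G => F.atomsOf ∪ G.atomsOf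
  | .imp F G => F.atomsOf ∪ G.atomsOf
  | .all _ F => F.atomsOf
  | .ex _ F => F.atomsOf

def Fml.isNegativeB : Fml C P ar → Bool
  | .atom _ _ => false
  | .eq _ _ => true
  | .bot => true
  | .and F G => F.isNegativeB && G.isNegativeB
  | .or F G => F.isNegativeB && G.isNegativeB
  | .imp _ G => G.isNegativeB
  | .all _ F => F.isNegativeB
  | .ex _ F => F.isNegativeB

/-- A formula is negative if every occurrence of every predicate constant in it
belongs to the antecedent of an implication. -/
def Fml.isNegative (F : Fml C P ar) : Prop := F.isNegativeB = true

/-- Atoms with a strictly positive occurrence. -/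
def Fml.spAtoms : Fml C P ar → Set (Atom C P ar)
  | .atom p t => {⟨p, t⟩}
  | .eq _ _ => ∅
  | .bot => ∅
  | .and F G => F.spAtoms ∪ G.spAtoms
  | .or F G => F.spAtoms ∪ G.spAtoms
  | .imp _ G => G.spAtoms
  | .all _ F => F.spAtoms
  | .ex _ F => F.spAtoms

/-- Implications `G → H` with a strictly positive occurrence. -/
def Fml.spImps : Fml C P ar → Set (Fml C P ar × Fml C P ar)
  | .atom _ _ => ∅
  | .eq _ _ => ∅
  | .bot => ∅
  | .and F G => F.spImps ∪ G.spImps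
  | .or F G => F.spImps ∪ G.spImps
  | .imp F G => insert (F, G) G.spImps
  | .all _ F => F.spImps
  | .ex _ F => F.spImps

/-- Atoms with an occurrence of polarity `b` (`true` = positive) that does not
belong to any occurrence of a negative subformula. -/
def Fml.polNN : Bool → Fml C P ar → Set (Atom C P ar)
  | true, .atom p t => {⟨p, t⟩}
  | false, .atom _ _ => ∅
  | _, .eq _ _ => ∅
  | _, .bot => ∅
  | b, .and F G =>
      if (Fml.and F G).isNegativeB then ∅ else Fml.polNN b F ∪ Fml.polNN b G
  | b, .or F G =>
      if (Fml.or F G).isNegativeB then ∅ else Fml.polNN b F ∪ Fml.polNN b G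
  | b, .imp F G =>
      if (Fml.imp F G).isNegativeB then ∅ else Fml.polNN (!b) F ∪ Fml.polNN b G
  | b, .all x F => if (Fml.all x F).isNegativeB then ∅ else Fml.polNN b F
  | b, .ex x F => if (Fml.ex x F).isNegativeB then ∅ else Fml.polNN b F

/-- `a` depends on `b` in `F`: `a` weakly depends on `b` in an implication that has a
strictly positive occurrence in `F`. -/
def Fml.depends (F : Fml C P ar) (a b : Atom C P ar) : Prop :=
  ∃ GH ∈ F.spImps, a ∈ (Prod.snd GH).spAtoms ∧ b ∈ Fml.polNN true (Prod.fst GH)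

/-- `E_F(v,u)`. -/
def satE (cI : C → D) (F : Fml C P ar) (vI uI : PredI P ar D) : Prop :=
  ∃ a b : Atom C P ar, F.depends a b ∧ ∃ θ : ℕ → D,
    vI a.1 (fun i => (a.2 i).eval cI θ) ∧ uI b.1 (fun i => (b.2 i).eval cI θ) ∧
      ¬ vI b.1 (fun i => (b.2 i).eval cI θ)

/-- `SC_F(u)` : Nonempty(u) ∧ ∀v((v < u) ∧ Nonempty(v) → E_F(v,u)). -/
def satSC (cI : C → D) (F : Fml C P ar) (uI : PredI P ar D) : Prop :=
  PredI.nonemp uI ∧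
    ∀ vI : PredI P ar D, PredI.lt vI uI → PredI.nonemp vI → satE cI F vI uI

/-- `Loop_F(u)` : SC_F(u) ∨ (Nonempty(u) ∧ ∀v((v ≤ u) ∧ SC_F(v) → E_F(v,u))). -/
def satLoopF (cI : C → D) (F : Fml C P ar) (uI : PredI P ar D) : Prop :=
  satSC cI F uI ∨ (PredI.nonemp uI ∧
    ∀ vI : PredI P ar D, PredI.le vI uI → satSC cI F vI → satE cI F vI uI)

/-- Semantic atoms `pᵢ(ξ⃗*)`, where `ξ⃗` is a tuple of universe elements. -/
abbrev SAtom (P : Type) (ar : P → ℕ) (D : Type) := Σ p : P, Fin (ar p) → D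

/-- Edges of the dependency graph of `F` w.r.t. an interpretation. -/
def edgeWrt (cI : C → D) (F : Fml C P ar) (a b : SAtom P ar D) : Prop :=
  ∃ a0 b0 : Atom C P ar, F.depends a0 b0 ∧ ∃ θ : ℕ → D,
    (⟨a0.1, fun i => (a0.2 i).eval cI θ⟩ : SAtom P ar D) = a ∧
    (⟨b0.1, fun i => (b0.2 i).eval cI θ⟩ : SAtom P ar D) = b

/-- The subgraph induced by `Y` is strongly connected. -/
def SCin {V : Type} (E : V → V → Prop) (Y : Set V) : Prop :=
  ∀ a ∈ Y, ∀ b ∈ Y, Relation.ReflTransGen (fun x y => x ∈ Y ∧ y ∈ Y ∧ E x y) a b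

/-- A loop of `F` w.r.t. `I`: nonempty (possibly infinite) set of semantic atoms
inducing a strongly connected subgraph of the dependency graph of `F` w.r.t. `I`. -/
def isLoopWrt (cI : C → D) (F : Fml C P ar) (Y : Set (SAtom P ar D)) : Prop :=
  Y.Nonempty ∧ SCin (edgeWrt cI F) Y

/-- An unbounded set of `F` w.r.t. `I`. -/
def isUnboundedWrt (cI : C → D) (F : Fml C P ar) (Y : Set (SAtom P ar D)) : Prop :=
  Y.Nonempty ∧ ∀ Z ⊆ Y, Z.Nonempty → SCin (edgeWrt cI F) Z →
    ∃ a ∈ Z, ∃ b ∈ Y \ Z, edgeWrt cI F a b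

/-- An extended loop of `F` w.r.t. `I`: a loop or an unbounded set. -/
def isExtLoopWrt (cI : C → D) (F : Fml C P ar) (Y : Set (SAtom P ar D)) : Prop :=
  isLoopWrt cI F Y ∨ isUnboundedWrt cI F Y

/-- Edges of the first-order dependency graph of `F`. -/
def foEdge (F : Fml C P ar) (a b : Atom C P ar) : Prop :=
  ∃ a0 b0 : Atom C P ar, F.depends a0 b0 ∧ ∃ θ : ℕ → Term C,
    a0.subst θ = a ∧ b0.subst θ = b

/-- A first-order loop of `F`. -/
def isFOLoop (F : Fml C P ar) (Y : Set (Atom C P ar)) : Prop :=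
  Y.Finite ∧ Y.Nonempty ∧ SCin (foEdge F) Y

/-- Normal form: no object constants occur in strictly positive occurrences of atoms. -/
def Fml.normalForm (F : Fml C P ar) : Prop :=
  ∀ a ∈ F.spAtoms, ∀ i, (a.2 i).isVar

/-- `Y₁` subsumes `Y₂`. -/
def subsumes (Y₁ Y₂ : Set (Atom C P ar)) : Prop :=
  ∃ θ : ℕ → Term C, Atom.subst θ '' Y₁ = Y₂

/-- Satisfaction of `NFES_F(Y)`; the terms of the atoms in `Y` are evaluated under the
outer valuation `w` (implementing the renaming of the bound variables of `F` apart
from `Y`), the terms of `F` under the current valuation `v`. -/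
def Fml.satNFES (cI : C → D) (pI : PredI P ar D) (Y : Set (Atom C P ar)) (w : ℕ → D) :
    Fml C P ar → (ℕ → D) → Prop
  | .atom p t, v => pI p (fun i => (t i).eval cI v) ∧
      ∀ t' : Fin (ar p) → Term C, (⟨p, t'⟩ : Atom C P ar) ∈ Y →
        ¬ ∀ i, (t i).eval cI v = (t' i).eval cI w
  | .eq t₁ t₂, v => t₁.eval cI v = t₂.eval cI v
  | .bot, _ => False
  | .and F G, v => F.satNFES cI pI Y w v ∧ G.satNFES cI pI Y w v
  | .or F G, v => F.satNFES cI pI Y w v ∨ G.satNFES cI pI Y w v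
  | .imp F G, v =>
      (F.satNFES cI pI Y w v → G.satNFES cI pI Y w v) ∧ (F.sat cI pI v → G.sat cI pI v)
  | .all x F, v => ∀ d : D, F.satNFES cI pI Y w (Function.update v x d)
  | .ex x F, v => ∃ d : D, F.satNFES cI pI Y w (Function.update v x d)

/-- Truth of an atom of `Y` under valuation `w`. -/
def Atom.holds (cI : C → D) (pI : PredI P ar D) (w : ℕ → D) (a : Atom C P ar) : Prop :=
  pI a.1 (fun i => (a.2 i).eval cI w)

/-- `I ⊨ FLF_F(Y)` : the universal closure (over the variables of `Y`) of
`⋀Y → ¬NFES_F(Y)`. -/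
def satFLF (cI : C → D) (pI : PredI P ar D) (F : Fml C P ar) (Y : Set (Atom C P ar)) : Prop :=
  ∀ w : ℕ → D, (∀ a ∈ Y, a.holds cI pI w) → ¬ F.satNFES cI pI Y w w

/-- Restricted variables `RV(F)`. -/
def Fml.RV : Fml C P ar → Set ℕ
  | .atom _ t => ⋃ i, (t i).vars
  | .eq (.var _) (.var _) => ∅
  | .eq t₁ t₂ => t₁.vars ∪ t₂.vars
  | .bot => ∅
  | .and F G => F.RV ∪ G.RV
  | .or F G => F.RV ∩ G.RV
  | .imp _ _ => ∅
  | .all x F => F.RV \ {x}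
  | .ex x F => F.RV \ {x}

/-- The unsafe variables of `F`: variables with an occurrence not in `∀x`, `∃x`, nor in
any subformula `G → H` with `x ∈ RV(G)`. -/
def Fml.unsafeVars : Fml C P ar → Set ℕ
  | .atom _ t => ⋃ i, (t i).vars
  | .eq t₁ t₂ => t₁.vars ∪ t₂.vars
  | .bot => ∅
  | .and F G => F.unsafeVars ∪ G.unsafeVars
  | .or F G => F.unsafeVars ∪ G.unsafeVars
  | .imp F G => (F.unsafeVars ∪ G.unsafeVars) \ F.RV
  | .all _ F => F.unsafeVars
  | .ex _ F => F.unsafeVars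

/-- `I ⊨ U_F`. -/
def satU (cI : C → D) (pI : PredI P ar D) (F : Fml C P ar) : Prop :=
  ∀ p : P, ∀ xs : Fin (ar p) → D, pI p xs → ∀ i, ∃ c ∈ F.consts, xs i = cI c

/-! ### Logic programs -/

def Term.varList : Term C → List ℕ
  | .var x => [x]
  | .const _ => []

def Fml.freeList : Fml C P ar → List ℕ
  | .atom p t => (List.finRange (ar p)).foldr (fun i l => (t i).varList ++ l) []
  | .eq t₁ t₂ => t₁.varList ++ t₂.varList
  | .bot => []
  | .and F G => F.freeList ++ G.freeList
  | .or F G => F.freeList ++ G.freeList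
  | .imp F G => F.freeList ++ G.freeList
  | .all x F => F.freeList.filter (· ≠ x)
  | .ex x F => F.freeList.filter (· ≠ x)

/-- Universal closure. -/
def Fml.closure (F : Fml C P ar) : Fml C P ar := F.freeList.foldr Fml.all F

def Fml.top : Fml C P ar := Fml.imp Fml.bot Fml.bot

def Atom.toFml (a : Atom C P ar) : Fml C P ar := Fml.atom a.1 a.2

/-- A nondisjunctive rule `A ← B, N` (`N` is required to be a negative formula
in the statements below). -/
structure NRule (C P : Type) (ar : P → ℕ) where
  head : Atom C P ar
  body : List (Atom C P ar)
  neg : Fml C P ar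

/-- A nondisjunctive program. -/
abbrev NProg (C P : Type) (ar : P → ℕ) := List (NRule C P ar)

def NRule.toFml (r : NRule C P ar) : Fml C P ar :=
  Fml.imp (r.body.foldr (fun a G => (Atom.toFml a).and G) r.neg) (Atom.toFml r.head)

/-- FOL-representation of a nondisjunctive program. -/
def NProg.toFml (Pr : NProg C P ar) : Fml C P ar :=
  Pr.foldr (fun r G => (Fml.closure (NRule.toFml r)).and G) Fml.top

/-- Terms occurring in `Y`. -/
def termsOf (Y : Set (Atom C P ar)) : Set (Term C) := {t | ∃ a ∈ Y, ∃ i, a.2 i = t}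

def NRule.headVars (r : NRule C P ar) : Set ℕ := Atom.vars r.head

/-- One disjunct of `FES_Π(Y)`, evaluated under the valuation `w` of the
variables of `Y` (the variables of the rule are implicitly renamed apart from `Y`:
they are interpreted by the existential valuation `s`, while terms of `Y` and the
`θ`-images of head variables are evaluated under `w`). -/
def NRule.FES (cI : C → D) (pI : PredI P ar D) (r : NRule C P ar)
    (Y : Set (Atom C P ar)) (w : ℕ → D) : Prop :=
  ∃ θ : ℕ → Option (Term C),
    (∀ x ∈ NRule.headVars r, ∃ t ∈ termsOf Y, θ x = some t) ∧
    (∀ x, x ∉ NRule.headVars r → θ x = none) ∧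
    Atom.subst (fun x => (θ x).getD (Term.var x)) r.head ∈ Y ∧
    ∃ s : ℕ → D,
      let v : ℕ → D := fun x => match θ x with
        | some t => t.eval cI w
        | none => s x
      (∀ b ∈ r.body, pI b.1 (fun i => (b.2 i).eval cI v)) ∧
      (NRule.neg r).sat cI pI v ∧
      (∀ b ∈ r.body, ∀ t' : Fin (ar b.1) → Term C, (⟨b.1, t'⟩ : Atom C P ar) ∈ Y →
        ¬ ∀ i, (b.2 i).eval cI v = (t' i).eval cI w)

/-- `FES_Π(Y)` under valuation `w`. -/
def NProg.FES (cI : C → D) (pI : PredI P ar D) (Pr : NProg C P ar)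
    (Y : Set (Atom C P ar)) (w : ℕ → D) : Prop :=
  ∃ r ∈ Pr, NRule.FES cI pI r Y w

/-- `I ⊨ FLF_Π(Y)`. -/
def NProg.satFLF (cI : C → D) (pI : PredI P ar D) (Pr : NProg C P ar)
    (Y : Set (Atom C P ar)) : Prop :=
  ∀ w : ℕ → D, (∀ a ∈ Y, Atom.holds cI pI w a) → NProg.FES cI pI Pr Y w

/-- `p(t)` depends on `q(t')` in the program `Pr`. -/
def NProg.depends (Pr : NProg C P ar) (a b : Atom C P ar) : Prop :=
  ∃ r ∈ Pr, NRule.head r = a ∧ b ∈ NRule.body r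

/-- Edges of the first-order dependency graph of a nondisjunctive program. -/
def NProg.foEdge (Pr : NProg C P ar) (a b : Atom C P ar) : Prop :=
  ∃ a0 b0 : Atom C P ar, NProg.depends Pr a0 b0 ∧ ∃ θ : ℕ → Term C,
    a0.subst θ = a ∧ b0.subst θ = b

/-- First-order loops of a nondisjunctive program. -/
def NProg.isFOLoop (Pr : NProg C P ar) (Y : Set (Atom C P ar)) : Prop :=
  Y.Finite ∧ Y.Nonempty ∧ SCin (NProg.foEdge Pr) Y

/-! ### Grounding (Herbrand universe `C`, constants denote themselves) -/

/-- Ground atoms of `σ(Π)^g`. -/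
abbrev GAtom (C P : Type) (ar : P → ℕ) := Σ p : P, Fin (ar p) → C

/-- The ground instance of an atom under an assignment of constants to variables. -/
def Atom.ground (v : ℕ → C) (a : Atom C P ar) : GAtom C P ar :=
  ⟨a.1, fun i => (a.2 i).eval id v⟩

/-- `I ⊨ LF_{Ground(Π)}(Y)` for a set `Y` of ground atoms and an Herbrand
interpretation given by `pI`. -/
def NProg.satLFg (pI : PredI P ar C) (Pr : NProg C P ar) (Y : Set (GAtom C P ar)) : Prop :=
  (∀ a ∈ Y, pI a.1 a.2) → ∃ r ∈ Pr, ∃ v : ℕ → C,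
    Atom.ground v (NRule.head r) ∈ Y ∧
    (∀ b ∈ NRule.body r, Atom.ground v b ∉ Y) ∧
    (∀ b ∈ NRule.body r, pI b.1 (fun i => (b.2 i).eval id v)) ∧
    (NRule.neg r).sat id pI v

/-- Edges of the dependency graph of `Ground(Π)`. -/
def NProg.gEdge (Pr : NProg C P ar) (a b : GAtom C P ar) : Prop :=
  ∃ r ∈ Pr, ∃ v : ℕ → C,
    Atom.ground v (NRule.head r) = a ∧ ∃ b0 ∈ NRule.body r, Atom.ground v b0 = b

/-- Loops of `Ground(Π)`. -/
def NProg.gLoop (Pr : NProg C P ar) (Y : Set (GAtom C P ar)) : Prop :=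
  Y.Nonempty ∧ SCin (NProg.gEdge Pr) Y

/-- A ground atom occurs in `Ground(Π)`. -/
def NProg.occursInGround (Pr : NProg C P ar) (a : GAtom C P ar) : Prop :=
  ∃ r ∈ Pr, ∃ v : ℕ → C,
    Atom.ground v (NRule.head r) = a ∨ (∃ b ∈ NRule.body r, Atom.ground v b = a) ∨
      ∃ a0 ∈ (NRule.neg r).atomsOf, Atom.ground v a0 = a

/-! ### Disjunctive programs -/

/-- A disjunctive rule `A ← B, N`. -/
structure DRule (C P : Type) (ar : P → ℕ) where
  head : List (Atom C P ar)
  body : List (Atom C P ar)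
  neg : Fml C P ar

abbrev DProg (C P : Type) (ar : P → ℕ) := List (DRule C P ar)

def DRule.toFml (r : DRule C P ar) : Fml C P ar :=
  Fml.imp (r.body.foldr (fun a G => (Atom.toFml a).and G) r.neg)
    (r.head.foldr (fun a G => (Atom.toFml a).or G) Fml.bot)

def DProg.toFml (Pr : DProg C P ar) : Fml C P ar :=
  Pr.foldr (fun r G => (Fml.closure (DRule.toFml r)).and G) Fml.top

def DRule.headVars (r : DRule C P ar) : Set ℕ :=
  {x | ∃ a ∈ r.head, ∃ i, a.2 i = Term.var x}

/-- One disjunct of the disjunctive `FES_Π(Y)` under valuation `w`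
(`θ x = none` means `θ` maps `x` to itself). -/
def DRule.FES (cI : C → D) (pI : PredI P ar D) (r : DRule C P ar)
    (Y : Set (Atom C P ar)) (w : ℕ → D) : Prop :=
  ∃ θ : ℕ → Option (Term C),
    (∀ x t, θ x = some t → x ∈ DRule.headVars r ∧ t ∈ termsOf Y) ∧
    (∃ a ∈ r.head, Atom.subst (fun x => (θ x).getD (Term.var x)) a ∈ Y) ∧
    ∃ s : ℕ → D,
      let v : ℕ → D := fun x => match θ x with
        | some t => t.eval cI w
        | none => s x
      (∀ b ∈ r.body, pI b.1 (fun i => (b.2 i).eval cI v)) ∧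
      (DRule.neg r).sat cI pI v ∧
      (∀ b ∈ r.body, ∀ t' : Fin (ar b.1) → Term C, (⟨b.1, t'⟩ : Atom C P ar) ∈ Y →
        ¬ ∀ i, (b.2 i).eval cI v = (t' i).eval cI w) ∧
      ¬ ∃ a ∈ r.head, pI a.1 (fun i => (a.2 i).eval cI v) ∧
          ∀ t' : Fin (ar a.1) → Term C, (⟨a.1, t'⟩ : Atom C P ar) ∈ Y →
            ¬ ∀ i, (a.2 i).eval cI v = (t' i).eval cI w

def DProg.FES (cI : C → D) (pI : PredI P ar D) (Pr : DProg C P ar)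
    (Y : Set (Atom C P ar)) (w : ℕ → D) : Prop :=
  ∃ r ∈ Pr, DRule.FES cI pI r Y w

/-! ### Extended programs -/

/-- Every occurrence of an implication belongs to (an occurrence of) a negative formula. -/
def Fml.impsProtected : Fml C P ar → Prop
  | .atom _ _ => True
  | .eq _ _ => True
  | .bot => True
  | .and F G => (Fml.and F G).isNegative ∨ (F.impsProtected ∧ G.impsProtected)
  | .or F G => (Fml.or F G).isNegative ∨ (F.impsProtected ∧ G.impsProtected)
  | .imp F G => (Fml.imp F G).isNegative
  | .all x F => (Fml.all x F).isNegative ∨ F.impsProtected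
  | .ex x F => (Fml.ex x F).isNegative ∨ F.impsProtected

/-- An extended rule `H ← G`. -/
structure ERule (C P : Type) (ar : P → ℕ) where
  head : Fml C P ar
  body : Fml C P ar

abbrev EProg (C P : Type) (ar : P → ℕ) := List (ERule C P ar)

def ERule.toFml (r : ERule C P ar) : Fml C P ar := Fml.imp r.body r.head

def EProg.toFml (Pr : EProg C P ar) : Fml C P ar :=
  Pr.foldr (fun r G => (Fml.closure (ERule.toFml r)).and G) Fml.top

/-- One disjunct of `EFES_Π(Y)` under valuation `w`: the rule head contains a strictly
positive occurrence of a predicate constant occurring in an atom of `Y`, and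
`∃z(NFES_G(Y) ∧ ¬NFES_H(Y))`. -/
def ERule.EFES (cI : C → D) (pI : PredI P ar D) (r : ERule C P ar)
    (Y : Set (Atom C P ar)) (w : ℕ → D) : Prop :=
  (∃ p : P, (∃ t, (⟨p, t⟩ : Atom C P ar) ∈ (ERule.head r).spAtoms) ∧
      ∃ t', (⟨p, t'⟩ : Atom C P ar) ∈ Y) ∧
  ∃ s : ℕ → D, (ERule.body r).satNFES cI pI Y w s ∧ ¬ (ERule.head r).satNFES cI pI Y w s

def EProg.EFES (cI : C → D) (pI : PredI P ar D) (Pr : EProg C P ar)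
    (Y : Set (Atom C P ar)) (w : ℕ → D) : Prop :=
  ∃ r ∈ Pr, ERule.EFES cI pI r Y w

/-- A disjunctive rule viewed as an extended rule. -/
def DRule.toERule (r : DRule C P ar) : ERule C P ar :=
  ⟨r.head.foldr (fun a G => (Atom.toFml a).or G) Fml.bot,
   r.body.foldr (fun a G => (Atom.toFml a).and G) r.neg⟩

/-!
In a model of `Π` the classical implication `G → H` of each rule holds under every valuation,
so `NFES` of the universal closure of a rule `H ← G` fails exactly when
`NFES_G(Y) ∧ ¬NFES_H(Y)` holds under some valuation. The side condition of `EFES` is then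
automatic: if no predicate of `Y` occurs strictly positively in `H`, every implication of `H`
lies in a negative formula, and on such formulas `NFES_H(Y)` is just `H`, which follows from
`G` and hence from `NFES_G(Y)`.
-/

open Function Set

theorem _root_.Set.EqOn.update_of_sdiff {s : Set ℕ} {v v' : ℕ → D} {x : ℕ}
    (h : EqOn v v' (s \ {x})) (d : D) : EqOn (update v x d) (update v' x d) s := by
  intro y hy
  by_cases hyx : y = x
  · subst hyx; simp
  · simp only [update_of_ne hyx]
    exact h ⟨hy, hyx⟩

section Semantics

variable (cI : C → D) (pI : PredI P ar D) (Y : Set (Atom C P ar)) (w : ℕ → D)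

theorem Term.eval_congr (t : Term C) {v v' : ℕ → D} (h : EqOn v v' t.vars) :
    t.eval cI v = t.eval cI v' := by
  cases t with
  | var x => exact h rfl
  | const c => rfl

theorem Fml.sat_congr (F : Fml C P ar) {v v' : ℕ → D} (h : EqOn v v' F.freeVars) :
    F.sat cI pI v ↔ F.sat cI pI v' := by
  induction F generalizing v v' with
  | atom p t =>
    have ht : ∀ i, (t i).eval cI v = (t i).eval cI v' := fun i =>
      (t i).eval_congr cI (h.mono (subset_iUnion (fun i => (t i).vars) i))
    simp only [Fml.sat, ht]
  | eq t₁ t₂ =>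
    simp only [Fml.sat, t₁.eval_congr cI (h.mono subset_union_left),
      t₂.eval_congr cI (h.mono subset_union_right)]
  | bot => rfl
  | and F G ihF ihG =>
    exact and_congr (ihF (h.mono subset_union_left)) (ihG (h.mono subset_union_right))
  | or F G ihF ihG =>
    exact or_congr (ihF (h.mono subset_union_left)) (ihG (h.mono subset_union_right))
  | imp F G ihF ihG =>
    exact imp_congr (ihF (h.mono subset_union_left)) (ihG (h.mono subset_union_right))
  | all x F ih => exact forall_congr' fun d => ih (h.update_of_sdiff d)
  | ex x F ih => exact exists_congr fun d => ih (h.update_of_sdiff d)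

theorem Fml.satNFES_congr (F : Fml C P ar) {v v' : ℕ → D} (h : EqOn v v' F.freeVars) :
    F.satNFES cI pI Y w v ↔ F.satNFES cI pI Y w v' := by
  induction F generalizing v v' with
  | atom p t =>
    have ht : ∀ i, (t i).eval cI v = (t i).eval cI v' := fun i =>
      (t i).eval_congr cI (h.mono (subset_iUnion (fun i => (t i).vars) i))
    simp only [Fml.satNFES, ht]
  | eq t₁ t₂ =>
    simp only [Fml.satNFES, t₁.eval_congr cI (h.mono subset_union_left),
      t₂.eval_congr cI (h.mono subset_union_right)]
  | bot => rfl
  | and F G ihF ihG =>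
    exact and_congr (ihF (h.mono subset_union_left)) (ihG (h.mono subset_union_right))
  | or F G ihF ihG =>
    exact or_congr (ihF (h.mono subset_union_left)) (ihG (h.mono subset_union_right))
  | imp F G ihF ihG =>
    exact and_congr
      (imp_congr (ihF (h.mono subset_union_left)) (ihG (h.mono subset_union_right)))
      (imp_congr (F.sat_congr cI pI (h.mono subset_union_left))
        (G.sat_congr cI pI (h.mono subset_union_right)))
  | all x F ih => exact forall_congr' fun d => ih (h.update_of_sdiff d)
  | ex x F ih => exact exists_congr fun d => ih (h.update_of_sdiff d)

theorem Fml.sat_of_satNFES (F : Fml C P ar) {v : ℕ → D} (h : F.satNFES cI pI Y w v) :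
    F.sat cI pI v := by
  induction F generalizing v with
  | atom p t => exact h.1
  | eq t₁ t₂ => exact h
  | bot => exact h
  | and F G ihF ihG => exact ⟨ihF h.1, ihG h.2⟩
  | or F G ihF ihG => exact h.imp ihF ihG
  | imp F G ihF ihG => exact h.2
  | all x F ih => exact fun d => ih (h d)
  | ex x F ih => exact h.imp fun d => ih

theorem Fml.satNFES_iff_sat_of_isNegative {F : Fml C P ar} (hF : F.isNegative) (v : ℕ → D) :
    F.satNFES cI pI Y w v ↔ F.sat cI pI v := by
  unfold Fml.isNegative at hF
  induction F generalizing v with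
  | atom p t => simp [Fml.isNegativeB] at hF
  | eq t₁ t₂ => rfl
  | bot => rfl
  | and F G ihF ihG =>
    rw [Fml.isNegativeB, Bool.and_eq_true] at hF
    exact and_congr (ihF hF.1 v) (ihG hF.2 v)
  | or F G ihF ihG =>
    rw [Fml.isNegativeB, Bool.and_eq_true] at hF
    exact or_congr (ihF hF.1 v) (ihG hF.2 v)
  | imp F G ihF ihG =>
    refine ⟨And.right, fun h => ⟨fun hF' => ?_, h⟩⟩
    exact (ihG hF v).2 (h (F.sat_of_satNFES cI pI Y w hF'))
  | all x F ih => exact forall_congr' fun d => ih hF _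
  | ex x F ih => exact exists_congr fun d => ih hF _

theorem Fml.satNFES_iff_sat_of_impsProtected {F : Fml C P ar} (hF : F.impsProtected)
    (hY : ∀ p t, (⟨p, t⟩ : Atom C P ar) ∈ F.spAtoms → ∀ t', (⟨p, t'⟩ : Atom C P ar) ∉ Y)
    (v : ℕ → D) : F.satNFES cI pI Y w v ↔ F.sat cI pI v := by
  induction F generalizing v with
  | atom p t => exact ⟨And.left, fun h => ⟨h, fun t' ht' _ => hY p t rfl t' ht'⟩⟩
  | eq t₁ t₂ => rfl
  | bot => rfl
  | and F G ihF ihG =>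
    rcases hF with hneg | ⟨hF, hG⟩
    · exact satNFES_iff_sat_of_isNegative cI pI Y w hneg v
    · exact and_congr (ihF hF (fun p t ht => hY p t (.inl ht)) v)
        (ihG hG (fun p t ht => hY p t (.inr ht)) v)
  | or F G ihF ihG =>
    rcases hF with hneg | ⟨hF, hG⟩
    · exact satNFES_iff_sat_of_isNegative cI pI Y w hneg v
    · exact or_congr (ihF hF (fun p t ht => hY p t (.inl ht)) v)
        (ihG hG (fun p t ht => hY p t (.inr ht)) v)
  | imp F G => exact satNFES_iff_sat_of_isNegative cI pI Y w hF v
  | all x F ih =>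
    rcases hF with hneg | hF
    · exact satNFES_iff_sat_of_isNegative cI pI Y w hneg v
    · exact forall_congr' fun d => ih hF hY _
  | ex x F ih =>
    rcases hF with hneg | hF
    · exact satNFES_iff_sat_of_isNegative cI pI Y w hneg v
    · exact exists_congr fun d => ih hF hY _

end Semantics

theorem Fml.freeVars_subset_freeList (F : Fml C P ar) : F.freeVars ⊆ {x | x ∈ F.freeList} := by
  have hterm : ∀ t : Term C, t.vars ⊆ {x | x ∈ t.varList} := by
    rintro (y | c) x hx
    · simp_all [Term.vars, Term.varList]
    · simp [Term.vars] at hx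
  induction F with
  | atom p t =>
    intro x hx
    obtain ⟨i, hi⟩ := mem_iUnion.1 hx
    have hmem : ∀ L : List (Fin (ar p)),
        x ∈ L.foldr (fun i l => (t i).varList ++ l) [] ↔ ∃ i ∈ L, x ∈ (t i).varList := by
      intro L; induction L <;> simp_all
    exact (hmem _).2 ⟨i, List.mem_finRange i, hterm _ hi⟩
  | eq t₁ t₂ =>
    exact union_subset_union (hterm t₁) (hterm t₂) |>.trans fun x hx => by
      simpa [Fml.freeList] using hx
  | bot => simp [Fml.freeVars]
  | and F G ihF ihG | or F G ihF ihG | imp F G ihF ihG =>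
    exact union_subset_union ihF ihG |>.trans fun x hx => by simpa [Fml.freeList] using hx
  | all y F ih | ex y F ih =>
    exact sdiff_subset_sdiff_left ih |>.trans fun x hx => by simpa [Fml.freeList] using hx

structure Fml.Tarskian (S : Fml C P ar → (ℕ → D) → Prop) : Prop where
  and_iff : ∀ F G v, S (.and F G) v ↔ S F v ∧ S G v
  all_iff : ∀ x F v, S (.all x F) v ↔ ∀ d, S F (update v x d)
  top : ∀ v, S .top v
  congr : ∀ F {v v'}, EqOn v v' F.freeVars → (S F v ↔ S F v')

namespace Fml.Tarskian

variable {S : Fml C P ar → (ℕ → D) → Prop} (hS : Tarskian S)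
include hS

theorem of_foldr_all {F : Fml C P ar} {L : List ℕ} {v : ℕ → D} (h : S (L.foldr .all F) v)
    {s : ℕ → D} (hs : EqOn s v (F.freeVars \ {x | x ∈ L})) : S F s := by
  induction L generalizing v with
  | nil => exact (hS.congr F (by simpa using hs)).2 h
  | cons a L ih =>
    refine ih ((hS.all_iff _ _ _).1 h (s a)) fun x hx => ?_
    by_cases hxa : x = a
    · subst hxa; simp
    · rw [update_of_ne hxa]
      exact hs ⟨hx.1, by simpa [hxa] using hx.2⟩

theorem foldr_all_of_forall {F : Fml C P ar} (h : ∀ s, S F s) (L : List ℕ) (v : ℕ → D) :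
    S (L.foldr .all F) v := by
  induction L generalizing v with
  | nil => exact h v
  | cons a L ih => exact (hS.all_iff _ _ _).2 fun d => ih _

theorem closure_iff (F : Fml C P ar) (v : ℕ → D) : S F.closure v ↔ ∀ s, S F s :=
  ⟨fun h _ => hS.of_foldr_all h (by simp [sdiff_eq_empty.2 F.freeVars_subset_freeList]),
    fun h => hS.foldr_all_of_forall h _ v⟩

theorem eProg_toFml_iff (Pr : EProg C P ar) (v : ℕ → D) :
    S Pr.toFml v ↔ ∀ r ∈ Pr, ∀ s, S r.toFml s := by
  induction Pr with
  | nil => simpa [EProg.toFml] using hS.top v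
  | cons r Pr ih =>
    rw [EProg.toFml, List.foldr_cons, hS.and_iff, hS.closure_iff, ← EProg.toFml, ih,
      List.forall_mem_cons]

end Fml.Tarskian

theorem Fml.tarskian_sat (cI : C → D) (pI : PredI P ar D) : Fml.Tarskian (Fml.sat cI pI) where
  and_iff _ _ _ := Iff.rfl
  all_iff _ _ _ := Iff.rfl
  top _ := id
  congr F _ _ := F.sat_congr cI pI

theorem Fml.tarskian_satNFES (cI : C → D) (pI : PredI P ar D) (Y : Set (Atom C P ar))
    (w : ℕ → D) : Fml.Tarskian (Fml.satNFES cI pI Y w) where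
  and_iff _ _ _ := Iff.rfl
  all_iff _ _ _ := Iff.rfl
  top _ := ⟨id, id⟩
  congr F _ _ := F.satNFES_congr cI pI Y w

theorem statement_16_general {C P D : Type} {ar : P → ℕ}
    (cI : C → D) (pI : PredI P ar D) (Pr : EProg C P ar)
    (hrules : ∀ r ∈ Pr, (ERule.head r).impsProtected ∧ (ERule.body r).impsProtected)
    (Y : Set (Atom C P ar))
    (hmodel : (EProg.toFml Pr).satSent cI pI) :
    ∀ w : ℕ → D,
      EProg.EFES cI pI Pr Y w ↔ ¬ (EProg.toFml Pr).satNFES cI pI Y w w := by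
  intro w
  have hrule := ((Fml.tarskian_sat cI pI).eProg_toFml_iff Pr w).1 (hmodel w)
  rw [(Fml.tarskian_satNFES cI pI Y w).eProg_toFml_iff]
  constructor
  · rintro ⟨r, hr, -, s, hbody, hhead⟩ hall
    exact hhead ((hall r hr s).1 hbody)
  · intro hfail
    push Not at hfail
    obtain ⟨r, hr, s, hs⟩ := hfail
    have hbody : r.body.satNFES cI pI Y w s ∧ ¬ r.head.satNFES cI pI Y w s :=
      Classical.not_imp.1 fun h => hs ⟨h, hrule r hr s⟩
    refine ⟨r, hr, ?_, s, hbody⟩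
    by_contra hY
    push Not at hY
    have hhead : r.head.sat cI pI s := hrule r hr s (r.body.sat_of_satNFES cI pI Y w hbody.1)
    exact hbody.2 ((r.head.satNFES_iff_sat_of_impsProtected cI pI Y w (hrules r hr).1
      (fun p t ht t' ht' => hY p ⟨t, ht⟩ t' ht') s).2 hhead)

/-- Proposition 7, first part: for an extended program `Π` with
FOL-representation `F` and a finite set `Y` of non-equality atoms, every model of `Π`
satisfies the universal closure of `EFES_Π(Y) ↔ ¬NFES_F(Y)`. -/
theorem statement_16 {C P D : Type} {ar : P → ℕ} [Nonempty D]
    (cI : C → D) (pI : PredI P ar D) (Pr : EProg C P ar)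
    (hrules : ∀ r ∈ Pr, (ERule.head r).impsProtected ∧ (ERule.body r).impsProtected)
    (Y : Set (Atom C P ar)) (hYfin : Y.Finite)
    (hmodel : (EProg.toFml Pr).satSent cI pI) :
    ∀ w : ℕ → D,
      EProg.EFES cI pI Pr Y w ↔ ¬ (EProg.toFml Pr).satNFES cI pI Y w w :=
  statement_16_general cI pI Pr hrules Y hmodel

end SMLF
end

section
/- For any negative first-order formula F with predicate constants among p = p1,…,pn, the formula NES_F(u) ↔ F is logically valid, where u = u1,…,un are predicate variables; that is, for every interpretation and every assignment of relations to u, NES_F(u) and F have the same truth value. -/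
set_option linter.unusedVariables false

namespace SMLF

variable {C P D : Type} {ar : P → ℕ}

/-!
Every clause of `NES_F(u)` is at least as strong as the corresponding clause of `F` (an atom
`pᵢ(t)` becomes `pᵢ(t) ∧ ¬uᵢ(t)`, and `F → G` is kept as a conjunct), so `NES_F(u) → F` holds
for every formula. For negative `F` the converse goes by induction: atoms never occur outside
an antecedent, and in the implication case `NES_F(u) → F → G → NES_G(u)` by the first part and
the induction hypothesis for `G`.
-/

theorem Fml.sat_of_satNES {cI : C → D} {pI uI : PredI P ar D} {F : Fml C P ar} {v : ℕ → D}
    (h : F.satNES cI pI uI v) : F.sat cI pI v := by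
  induction F generalizing v with
  | atom p t => exact h.1
  | eq t₁ t₂ => exact h
  | bot => exact h
  | and F G ihF ihG => exact ⟨ihF h.1, ihG h.2⟩
  | or F G ihF ihG => exact h.imp ihF ihG
  | imp F G ihF ihG => exact h.2
  | all x F ihF => exact fun d => ihF (h d)
  | ex x F ihF => exact h.imp fun d hd => ihF hd

theorem Fml.not_isNegative_atom (p : P) (t : Fin (ar p) → Term C) :
    ¬ (Fml.atom p t : Fml C P ar).isNegative := by
  simp [Fml.isNegative, Fml.isNegativeB]

theorem Fml.isNegative_and {F G : Fml C P ar} :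
    (F.and G).isNegative ↔ F.isNegative ∧ G.isNegative := by
  simp only [Fml.isNegative, Fml.isNegativeB, Bool.and_eq_true]

theorem Fml.isNegative_or {F G : Fml C P ar} :
    (F.or G).isNegative ↔ F.isNegative ∧ G.isNegative := by
  simp only [Fml.isNegative, Fml.isNegativeB, Bool.and_eq_true]

/-- Lemma 7: for any negative formula `F`, the formula `NES_F(u) ↔ F` is
logically valid. -/
theorem statement_19 {C P D : Type} {ar : P → ℕ}
    (F : Fml C P ar) (hFneg : F.isNegative)
    (cI : C → D) (pI uI : PredI P ar D) (v : ℕ → D) :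
    F.satNES cI pI uI v ↔ F.sat cI pI v := by
  induction F generalizing v with
  | atom p t => exact absurd hFneg (Fml.not_isNegative_atom p t)
  | eq t₁ t₂ => exact Iff.rfl
  | bot => exact Iff.rfl
  | and F G ihF ihG =>
    obtain ⟨hF, hG⟩ := Fml.isNegative_and.mp hFneg
    exact and_congr (ihF hF v) (ihG hG v)
  | or F G ihF ihG =>
    obtain ⟨hF, hG⟩ := Fml.isNegative_or.mp hFneg
    exact or_congr (ihF hF v) (ihG hG v)
  | imp F G ihF ihG =>
    refine ⟨fun h => h.2, fun h => ⟨fun hF => ?_, h⟩⟩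
    exact (ihG hFneg v).mpr (h (Fml.sat_of_satNES hF))
  | all x F ihF => exact forall_congr' fun d => ihF hFneg _
  | ex x F ihF => exact exists_congr fun d => ihF hFneg _

end SMLF
end
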